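/- arXiv:2301.06280 — 4 statements merged into one kernel-verified Lean document; each statement's English description precedes it below -/
import Mathlib

section
/- Let N = p + q with p, q ≥ 1, and let W = [W_1 | W_2] and Z = [Z_1 | Z_2] be N×N real orthogonal matrices, where W_1, Z_1 have p columns. Then the subspace distance dist(span{W_1}, span{Z_1}) := ||Z_2^T W_1|| (spectral norm) equals min over X ∈ ℝ^{p×p} of ||W_1 − Z_1 X||. -/
open Matrix

/-- The spectral (operator 2-)norm of a real matrix. -/
noncomputable def snorm {m n : Type*} [Fintype m] [Fintype n] [DecidableEq n]
    (A : Matrix m n ℝ) : ℝ :=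
  ‖LinearMap.toContinuousLinearMap (Matrix.toEuclideanLin A)‖

/-!
Since `Z` is orthogonal, `Z₂ᵀ Z₁ = 0`, so `Z₂ᵀ (W₁ - Z₁ X) = Z₂ᵀ W₁` for every `X`; as `Z₂ᵀ` is a
contraction, `‖Z₂ᵀ W₁‖ ≤ ‖W₁ - Z₁ X‖`. For `X = Z₁ᵀ W₁` the identity `Z₁ Z₁ᵀ + Z₂ Z₂ᵀ = 1` gives
`W₁ - Z₁ X = Z₂ (Z₂ᵀ W₁)`, whose norm is `‖Z₂ᵀ W₁‖` because `Z₂` has orthonormal columns.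
-/

open scoped Matrix.Norms.L2Operator

namespace Matrix

section CommRing

variable {R ι m n : Type*} [CommRing R] [Fintype ι] [Fintype m] [Fintype n]
  [DecidableEq ι] [DecidableEq m] [DecidableEq n]

theorem mul_transpose_add_mul_transpose_eq_one (e : ι ≃ m ⊕ n) {A : Matrix ι m R}
    {B : Matrix ι n R} (h : (fromCols A B)ᵀ * fromCols A B = 1) : A * Aᵀ + B * Bᵀ = 1 := by
  rw [transpose_fromCols] at h
  rw [← fromCols_mul_fromRows]
  exact (fromCols_mul_fromRows_eq_one_comm e _ _ _ _).mpr h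

end CommRing

variable {m n k : Type*} [Fintype m] [Fintype n] [Fintype k]

theorem snorm_eq_l2_opNorm [DecidableEq n] (A : Matrix m n ℝ) : snorm A = ‖A‖ := rfl

theorem l2_opNorm_one_le [DecidableEq n] : ‖(1 : Matrix n n ℝ)‖ ≤ 1 := by
  rw [l2_opNorm_def]
  exact ContinuousLinearMap.opNorm_le_bound _ zero_le_one fun x => by simp

theorem l2_opNorm_le_one_of_transpose_mul_self_eq_one [DecidableEq n] {Q : Matrix m n ℝ}
    (hQ : Qᵀ * Q = 1) : ‖Q‖ ≤ 1 := by
  have h : ‖Q‖ * ‖Q‖ ≤ 1 := by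
    rw [← l2_opNorm_conjTranspose_mul_self, conjTranspose_eq_transpose_of_trivial, hQ]
    exact l2_opNorm_one_le
  nlinarith [norm_nonneg Q]

theorem l2_opNorm_transpose_le_one_of_transpose_mul_self_eq_one [DecidableEq m] [DecidableEq n]
    {Q : Matrix m n ℝ} (hQ : Qᵀ * Q = 1) : ‖Qᵀ‖ ≤ 1 := by
  rw [← conjTranspose_eq_transpose_of_trivial, l2_opNorm_conjTranspose]
  exact l2_opNorm_le_one_of_transpose_mul_self_eq_one hQ

theorem l2_opNorm_mul_le_of_le_one [DecidableEq n] [DecidableEq k] {Q : Matrix m n ℝ}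
    (hQ : ‖Q‖ ≤ 1) (A : Matrix n k ℝ) : ‖Q * A‖ ≤ ‖A‖ :=
  (l2_opNorm_mul Q A).trans (mul_le_of_le_one_left (norm_nonneg A) hQ)

theorem l2_opNorm_mul_of_transpose_mul_self_eq_one [DecidableEq m] [DecidableEq n]
    [DecidableEq k] {Q : Matrix m n ℝ} (hQ : Qᵀ * Q = 1) (A : Matrix n k ℝ) :
    ‖Q * A‖ = ‖A‖ := by
  refine le_antisymm
    (l2_opNorm_mul_le_of_le_one (l2_opNorm_le_one_of_transpose_mul_self_eq_one hQ) A) ?_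
  calc ‖A‖ = ‖Qᵀ * (Q * A)‖ := by rw [← Matrix.mul_assoc, hQ, Matrix.one_mul]
    _ ≤ ‖Q * A‖ := l2_opNorm_mul_le_of_le_one
      (l2_opNorm_transpose_le_one_of_transpose_mul_self_eq_one hQ) _

end Matrix

theorem dist_eq_min_general
    (p q : ℕ)
    (W₁ Z₁ : Matrix (Fin p ⊕ Fin q) (Fin p) ℝ)
    (Z₂ : Matrix (Fin p ⊕ Fin q) (Fin q) ℝ)
    (hZ : (Matrix.fromCols Z₁ Z₂)ᵀ * Matrix.fromCols Z₁ Z₂ = 1) :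
    IsLeast (Set.range fun X : Matrix (Fin p) (Fin p) ℝ => snorm (W₁ - Z₁ * X))
      (snorm (Z₂ᵀ * W₁)) := by
  have hblocks := hZ
  rw [transpose_fromCols, fromRows_mul_fromCols, ← fromBlocks_one, fromBlocks_inj] at hblocks
  obtain ⟨-, -, hZ₂₁, hZ₂₂⟩ := hblocks
  have hcomplete := mul_transpose_add_mul_transpose_eq_one (Equiv.refl _) hZ
  simp only [snorm_eq_l2_opNorm]
  refine ⟨⟨Z₁ᵀ * W₁, ?_⟩, ?_⟩
  · show ‖W₁ - Z₁ * (Z₁ᵀ * W₁)‖ = ‖Z₂ᵀ * W₁‖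
    have hproj : W₁ - Z₁ * (Z₁ᵀ * W₁) = Z₂ * (Z₂ᵀ * W₁) := by
      rw [sub_eq_iff_eq_add', ← Matrix.mul_assoc, ← Matrix.mul_assoc, ← Matrix.add_mul,
        hcomplete, Matrix.one_mul]
    rw [hproj, l2_opNorm_mul_of_transpose_mul_self_eq_one hZ₂₂]
  · rintro _ ⟨X, rfl⟩
    calc ‖Z₂ᵀ * W₁‖ = ‖Z₂ᵀ * (W₁ - Z₁ * X)‖ := by
          rw [Matrix.mul_sub, ← Matrix.mul_assoc, hZ₂₁, Matrix.zero_mul, sub_zero]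
      _ ≤ ‖W₁ - Z₁ * X‖ := l2_opNorm_mul_le_of_le_one
          (l2_opNorm_transpose_le_one_of_transpose_mul_self_eq_one hZ₂₂) _

/-- for orthogonal `W = [W₁|W₂]`, `Z = [Z₁|Z₂]` of size `N = p + q`,
the subspace distance `‖Z₂ᵀ W₁‖` is the minimum of `‖W₁ − Z₁ X‖` over all
`X ∈ ℝ^{p×p}`. -/
theorem dist_eq_min
    (p q : ℕ) (hp : 1 ≤ p) (hq : 1 ≤ q)
    (W₁ Z₁ : Matrix (Fin p ⊕ Fin q) (Fin p) ℝ)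
    (W₂ Z₂ : Matrix (Fin p ⊕ Fin q) (Fin q) ℝ)
    (hW : (Matrix.fromCols W₁ W₂)ᵀ * Matrix.fromCols W₁ W₂ = 1)
    (hZ : (Matrix.fromCols Z₁ Z₂)ᵀ * Matrix.fromCols Z₁ Z₂ = 1) :
    IsLeast (Set.range fun X : Matrix (Fin p) (Fin p) ℝ => snorm (W₁ - Z₁ * X))
      (snorm (Z₂ᵀ * W₁)) :=
  dist_eq_min_general p q W₁ Z₁ Z₂ hZ
end

section
/- Let Ỹ, Y ∈ ℝ^{n×p} and Z̃, Z ∈ ℝ^{m×p} with m, n > p, all of full column rank, such that [Ỹ; Z̃] and [Y; Z] are column orthonormal (m+n)×p matrices. Then dist(span{Ỹ}, span{Y}) ≤ √(1 + σ_max²({Ỹ, Z̃})) · dist(span{[Ỹ; Z̃]}, span{[Y; Z]}), where σ_max({Ỹ, Z̃}) is the largest generalized singular value of the pair {Ỹ, Z̃}. -/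
open Matrix

/-- The orthogonal projector onto the column space of a full column rank matrix. -/
noncomputable def projMat {m p : Type*} [Fintype m] [Fintype p] [DecidableEq m]
    [DecidableEq p] (B : Matrix m p ℝ) : Matrix m m ℝ :=
  B * (Bᵀ * B)⁻¹ * Bᵀ

open scoped RealInnerProductSpace

/-! Write `P_S` for the orthogonal projection onto `S` and `ε` for the distance of the stacked
subspaces. For `u = Ỹx`, the top block of the projection of `[Ỹ; Z̃]x` onto span [Y; Z] lies in
span Y, so `‖u - P_Y u‖ ≤ ε ‖[Ỹ; Z̃]x‖`; the GSVD gives `‖Z̃x‖ ≤ σ_max ‖Ỹx‖`, hence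
`‖[Ỹ; Z̃]x‖ ≤ √(1 + σ_max²) ‖u‖`. For subspaces `K`, `L` of equal dimension such a one-sided bound
`‖(1 - P_L) P_K‖ ≤ b` already gives `‖P_K - P_L‖ ≤ b`. When `b < 1`, `P_L` maps `K` injectively,
hence onto `L`; writing `y ∈ L` as `P_L x` with `x ∈ K`, Cauchy–Schwarz on `⟪P_K y, x⟫ = ‖y‖²`
transfers the bound to `‖(1 - P_K) P_L‖`. Then `(P_K - P_L) z` splits into the orthogonal pieces
`(1 - P_L) P_K z` and `P_L (1 - P_K) z`, and `P_L (1 - P_K)` is the adjoint of `(1 - P_K) P_L`. -/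

namespace Submodule

variable {E : Type*} [NormedAddCommGroup E] [InnerProductSpace ℝ E]

lemma norm_sq_eq_norm_sq_starProjection_add (K : Submodule ℝ E) [K.HasOrthogonalProjection]
    (x : E) : ‖x‖ ^ 2 = ‖K.starProjection x‖ ^ 2 + ‖x - K.starProjection x‖ ^ 2 := by
  rw [K.norm_sq_eq_add_norm_sq_starProjection x, K.starProjection_orthogonal']
  rfl

lemma real_inner_starProjection_self (K : Submodule ℝ E) [K.HasOrthogonalProjection]
    (x : E) : ⟪K.starProjection x, x⟫ = ‖K.starProjection x‖ ^ 2 := by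
  simpa using K.re_inner_starProjection_eq_normSq x

lemma norm_sub_starProjection_le_norm_sub {K : Submodule ℝ E} [K.HasOrthogonalProjection]
    (x : E) {w : E} (hw : w ∈ K) : ‖x - K.starProjection x‖ ≤ ‖x - w‖ := by
  rw [starProjection_minimal]
  exact ciInf_le ⟨0, by rintro _ ⟨v, rfl⟩; positivity⟩ (⟨w, hw⟩ : K)

variable {K L : Submodule ℝ E} [L.HasOrthogonalProjection] {b : ℝ}

lemma exists_mem_starProjection_eq_of_finrank_eq [FiniteDimensional ℝ K]
    [FiniteDimensional ℝ L] (hKL : Module.finrank ℝ K = Module.finrank ℝ L) (hb1 : b < 1)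
    (h : ∀ x ∈ K, ‖x - L.starProjection x‖ ≤ b * ‖x‖) {y : E} (hy : y ∈ L) :
    ∃ x ∈ K, L.starProjection x = y := by
  set f : K →ₗ[ℝ] L := (L.starProjection.toLinearMap ∘ₗ K.subtype).codRestrict L
    fun x => L.starProjection_apply_mem x
  have hf : Function.Injective f := by
    refine injective_iff_map_eq_zero f |>.mpr fun x hx => ?_
    have hQx : L.starProjection (x : E) = 0 := congrArg Subtype.val hx
    have hx_le := h x x.2
    rw [hQx, sub_zero] at hx_le
    exact Subtype.ext <| norm_eq_zero.mp (by nlinarith [norm_nonneg (x : E)])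
  obtain ⟨x, hx⟩ := (LinearMap.injective_iff_surjective_of_finrank_eq_finrank hKL).mp hf ⟨y, hy⟩
  exact ⟨x, x.2, congrArg Subtype.val hx⟩

variable [K.HasOrthogonalProjection]

lemma norm_starProjection_le_of_mem_orthogonal (hb : 0 ≤ b)
    (h : ∀ y ∈ L, ‖y - K.starProjection y‖ ≤ b * ‖y‖) {w : E} (hw : w ∈ Kᗮ) :
    ‖L.starProjection w‖ ≤ b * ‖w‖ := by
  set y := L.starProjection w
  have hKw : ⟪K.starProjection y, w⟫ = 0 :=
    Submodule.inner_right_of_mem_orthogonal (K.starProjection_apply_mem y) hw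
  have hsq : ‖y‖ ^ 2 ≤ b * ‖y‖ * ‖w‖ :=
    calc ‖y‖ ^ 2 = ⟪y - K.starProjection y, w⟫ := by
          rw [inner_sub_left, hKw, sub_zero, real_inner_starProjection_self]
    _ ≤ ‖y - K.starProjection y‖ * ‖w‖ := real_inner_le_norm _ _
    _ ≤ b * ‖y‖ * ‖w‖ := by
          gcongr
          exact h y (L.starProjection_apply_mem w)
  rcases (norm_nonneg y).eq_or_lt with hy | hy
  · rw [← hy]
    positivity
  · nlinarith

lemma norm_sub_starProjection_le_of_finrank_eq [FiniteDimensional ℝ K] [FiniteDimensional ℝ L]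
    (hKL : Module.finrank ℝ K = Module.finrank ℝ L) (hb : 0 ≤ b)
    (h : ∀ x ∈ K, ‖x - L.starProjection x‖ ≤ b * ‖x‖) {y : E} (hy : y ∈ L) :
    ‖y - K.starProjection y‖ ≤ b * ‖y‖ := by
  have hPy := K.norm_sq_eq_norm_sq_starProjection_add y
  rcases le_or_gt 1 b with hb1 | hb1
  · have : ‖y - K.starProjection y‖ ≤ ‖y‖ :=
      le_of_pow_le_pow_left₀ two_ne_zero (norm_nonneg y) (by nlinarith)
    nlinarith [norm_nonneg y]
  obtain ⟨x, hxK, hQx⟩ := exists_mem_starProjection_eq_of_finrank_eq hKL hb1 h hy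
  have hlong : (1 - b ^ 2) * ‖x‖ ^ 2 ≤ ‖y‖ ^ 2 := by
    have hQ := L.norm_sq_eq_norm_sq_starProjection_add x
    have hx_le := h x hxK
    rw [hQx] at hQ hx_le
    nlinarith [norm_nonneg (x - y)]
  have hcs : ‖y‖ ^ 2 ≤ ‖K.starProjection y‖ * ‖x‖ :=
    calc ‖y‖ ^ 2 = ⟪K.starProjection y, x⟫ := by
          rw [K.inner_starProjection_left_eq_right, K.starProjection_eq_self_iff.mpr hxK,
            ← hQx, L.real_inner_starProjection_self]
    _ ≤ ‖K.starProjection y‖ * ‖x‖ := real_inner_le_norm _ _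
  have hPy_long : (1 - b ^ 2) * ‖y‖ ^ 2 ≤ ‖K.starProjection y‖ ^ 2 := by
    rcases (norm_nonneg x).eq_or_lt with hx0 | hx0
    · obtain rfl : y = 0 := by
        rw [← hx0] at hcs
        exact norm_eq_zero.mp (by nlinarith [norm_nonneg y])
      simp
    · refine le_of_mul_le_mul_left ?_ (pow_pos hx0 2)
      nlinarith [mul_le_mul_of_nonneg_left hlong (sq_nonneg ‖y‖),
        mul_le_mul hcs hcs (sq_nonneg _) (by positivity)]
  refine le_of_pow_le_pow_left₀ two_ne_zero (by positivity) ?_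
  nlinarith

lemma norm_starProjection_sub_starProjection_le (hb : 0 ≤ b)
    (hK : ∀ x ∈ K, ‖x - L.starProjection x‖ ≤ b * ‖x‖)
    (hL : ∀ y ∈ L, ‖y - K.starProjection y‖ ≤ b * ‖y‖) :
    ‖K.starProjection - L.starProjection‖ ≤ b := by
  refine ContinuousLinearMap.opNorm_le_bound _ hb fun z => ?_
  set x := K.starProjection z
  set w := z - x
  have hsplit : (K.starProjection - L.starProjection) z =
      (x - L.starProjection x) - L.starProjection w := by
    simp only [w, _root_.sub_apply, map_sub]
    abel
  have horth : ⟪x - L.starProjection x, L.starProjection w⟫ = 0 :=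
    L.starProjection_inner_eq_zero x _ (L.starProjection_apply_mem w)
  have h1 : ‖x - L.starProjection x‖ ≤ b * ‖x‖ := hK x (K.starProjection_apply_mem z)
  have h2 : ‖L.starProjection w‖ ≤ b * ‖w‖ :=
    norm_starProjection_le_of_mem_orthogonal hb hL (K.sub_starProjection_mem_orthogonal z)
  have hz := K.norm_sq_eq_norm_sq_starProjection_add z
  refine le_of_pow_le_pow_left₀ two_ne_zero (by positivity) ?_
  rw [hsplit, norm_sub_sq_real, horth, mul_pow, hz]
  nlinarith [pow_le_pow_left₀ (norm_nonneg _) h1 2, pow_le_pow_left₀ (norm_nonneg _) h2 2]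

lemma norm_starProjection_sub_starProjection_le_of_finrank_eq
    [FiniteDimensional ℝ K] [FiniteDimensional ℝ L]
    (hKL : Module.finrank ℝ K = Module.finrank ℝ L) (hb : 0 ≤ b)
    (h : ∀ x ∈ K, ‖x - L.starProjection x‖ ≤ b * ‖x‖) :
    ‖K.starProjection - L.starProjection‖ ≤ b :=
  norm_starProjection_sub_starProjection_le hb h
    fun _ => norm_sub_starProjection_le_of_finrank_eq hKL hb h

end Submodule

namespace Matrix

lemma toEuclideanLin_mul {ι κ κ' : Type*} [Fintype κ] [DecidableEq κ] [Fintype κ']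
    [DecidableEq κ'] (A : Matrix ι κ ℝ) (B : Matrix κ κ' ℝ) :
    (A * B).toEuclideanLin = A.toEuclideanLin ∘ₗ B.toEuclideanLin :=
  toLpLin_mul 2 2 2 A B

variable {ι ι' κ κ' : Type*} [Fintype ι] [Fintype ι'] [Fintype κ] [Fintype κ']
  [DecidableEq κ] [DecidableEq κ']

noncomputable def colSpan (B : Matrix ι κ ℝ) : Submodule ℝ (EuclideanSpace ℝ ι) :=
  LinearMap.range B.toEuclideanLin

lemma finrank_colSpan (B : Matrix ι κ ℝ) : Module.finrank ℝ B.colSpan = B.rank :=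
  (B.rank_eq_finrank_range_toLin (PiLp.basisFun 2 ℝ ι) (PiLp.basisFun 2 ℝ κ)).symm

lemma isUnit_det_transpose_mul_self_of_rank_eq {B : Matrix ι κ ℝ}
    (h : B.rank = Fintype.card κ) : IsUnit (Bᵀ * B).det := by
  rw [← isUnit_iff_isUnit_det, ← mulVec_surjective_iff_isUnit]
  refine LinearMap.range_eq_top.mp
    (Submodule.eq_top_of_finrank_eq (S := LinearMap.range (Bᵀ * B).mulVecLin) ?_)
  rw [Module.finrank_fintype_fun_eq_card, ← h, ← rank_transpose_mul_self]
  rfl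

lemma transpose_mul_projMat {B : Matrix ι κ ℝ} [DecidableEq ι] (h : IsUnit (Bᵀ * B).det) :
    Bᵀ * projMat B = Bᵀ := by
  rw [projMat, ← Matrix.mul_assoc, ← Matrix.mul_assoc, mul_nonsing_inv _ h, Matrix.one_mul]

lemma toEuclideanLin_projMat {B : Matrix ι κ ℝ} [DecidableEq ι] (h : IsUnit (Bᵀ * B).det) :
    (projMat B).toEuclideanLin = (B.colSpan.starProjection : _ →ₗ[ℝ] _) := by
  ext1 u
  symm
  refine Submodule.eq_starProjection_of_mem_of_inner_eq_zero ?_ ?_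
  · refine ⟨((Bᵀ * B)⁻¹ * Bᵀ).toEuclideanLin u, ?_⟩
    rw [← LinearMap.comp_apply, ← toEuclideanLin_mul, ← Matrix.mul_assoc]
    rfl
  · rintro _ ⟨x, rfl⟩
    rw [← LinearMap.adjoint_inner_left, ← toEuclideanLin_conjTranspose_eq_adjoint,
      conjTranspose_eq_transpose_of_trivial, map_sub, ← LinearMap.comp_apply, ← toEuclideanLin_mul,
      transpose_mul_projMat h, sub_self, inner_zero_left]

lemma snorm_projMat_sub_projMat [DecidableEq ι] {A B : Matrix ι κ ℝ}
    (hA : IsUnit (Aᵀ * A).det) (hB : IsUnit (Bᵀ * B).det) :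
    snorm (projMat A - projMat B) = ‖A.colSpan.starProjection - B.colSpan.starProjection‖ := by
  rw [snorm, map_sub, toEuclideanLin_projMat hA, toEuclideanLin_projMat hB]
  rfl

lemma norm_sq_toEuclideanLin_fromRows (A : Matrix ι κ ℝ) (B : Matrix ι' κ ℝ)
    (x : EuclideanSpace ℝ κ) :
    ‖(fromRows A B).toEuclideanLin x‖ ^ 2 =
      ‖A.toEuclideanLin x‖ ^ 2 + ‖B.toEuclideanLin x‖ ^ 2 := by
  simp only [EuclideanSpace.norm_sq_eq, toLpLin_apply, fromRows_mulVec,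
    Fintype.sum_sum_type, Sum.elim_inl, Sum.elim_inr]

lemma norm_sub_le_norm_fromRows_sub (A : Matrix ι κ ℝ) (B : Matrix ι' κ ℝ)
    (C : Matrix ι κ' ℝ) (D : Matrix ι' κ' ℝ) (x : EuclideanSpace ℝ κ) (y : EuclideanSpace ℝ κ') :
    ‖A.toEuclideanLin x - C.toEuclideanLin y‖ ≤
      ‖(fromRows A B).toEuclideanLin x - (fromRows C D).toEuclideanLin y‖ := by
  refine le_of_pow_le_pow_left₀ two_ne_zero (norm_nonneg _) ?_
  simp only [EuclideanSpace.norm_sq_eq, toLpLin_apply, fromRows_mulVec,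
    Fintype.sum_sum_type, WithLp.ofLp_sub, Pi.sub_apply, Sum.elim_inl]
  exact le_add_of_nonneg_right (by positivity)

lemma norm_toEuclideanLin_of_transpose_mul_self_eq_one {W : Matrix ι κ ℝ} (hW : Wᵀ * W = 1)
    (x : EuclideanSpace ℝ κ) : ‖W.toEuclideanLin x‖ = ‖x‖ := by
  rw [← sq_eq_sq₀ (norm_nonneg _) (norm_nonneg _), ← real_inner_self_eq_norm_sq,
    ← real_inner_self_eq_norm_sq, EuclideanSpace.inner_eq_star_dotProduct,
    EuclideanSpace.inner_eq_star_dotProduct, star_trivial, star_trivial, toLpLin_apply,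
    dotProduct_mulVec, ← vecMul_transpose, vecMul_vecMul, hW, vecMul_one]

lemma norm_sq_toEuclideanLin_diagonal_le {α β : κ → ℝ} {c : ℝ}
    (h : ∀ i, α i ^ 2 ≤ c * β i ^ 2) (w : EuclideanSpace ℝ κ) :
    ‖(diagonal α).toEuclideanLin w‖ ^ 2 ≤ c * ‖(diagonal β).toEuclideanLin w‖ ^ 2 := by
  simp only [EuclideanSpace.norm_sq_eq, toLpLin_apply, mulVec_diagonal, Finset.mul_sum]
  gcongr with i
  simp only [Real.norm_eq_abs, sq_abs, mul_pow, ← mul_assoc]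
  exact mul_le_mul_of_nonneg_right (h i) (sq_nonneg _)

lemma norm_sq_toEuclideanLin_mul_diagonal_mul_le {W : Matrix ι κ ℝ} {G : Matrix ι' κ ℝ}
    (hW : Wᵀ * W = 1) (hG : Gᵀ * G = 1) {α β : κ → ℝ} {c : ℝ}
    (h : ∀ i, α i ^ 2 ≤ c * β i ^ 2) (M : Matrix κ κ' ℝ) (x : EuclideanSpace ℝ κ') :
    ‖(W * diagonal α * M).toEuclideanLin x‖ ^ 2 ≤
      c * ‖(G * diagonal β * M).toEuclideanLin x‖ ^ 2 := by
  simp only [toEuclideanLin_mul, LinearMap.comp_apply,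
    norm_toEuclideanLin_of_transpose_mul_self_eq_one hW,
    norm_toEuclideanLin_of_transpose_mul_self_eq_one hG]
  exact norm_sq_toEuclideanLin_diagonal_le h _

lemma norm_sub_starProjection_colSpan_le (A : Matrix ι κ ℝ) (B : Matrix ι' κ ℝ)
    (C : Matrix ι κ' ℝ) (D : Matrix ι' κ' ℝ) (x : EuclideanSpace ℝ κ) :
    ‖A.toEuclideanLin x - C.colSpan.starProjection (A.toEuclideanLin x)‖ ≤
      ‖(fromRows A B).colSpan.starProjection - (fromRows C D).colSpan.starProjection‖ *
        ‖(fromRows A B).toEuclideanLin x‖ := by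
  set v := (fromRows A B).toEuclideanLin x
  obtain ⟨y, hy⟩ := (fromRows C D).colSpan.starProjection_apply_mem v
  have hv : (fromRows A B).colSpan.starProjection v = v :=
    Submodule.starProjection_eq_self_iff.mpr ⟨x, rfl⟩
  calc _ ≤ ‖A.toEuclideanLin x - C.toEuclideanLin y‖ :=
        Submodule.norm_sub_starProjection_le_norm_sub _ (LinearMap.mem_range_self _ y)
    _ ≤ ‖v - (fromRows C D).toEuclideanLin y‖ := norm_sub_le_norm_fromRows_sub A B C D x y
    _ = ‖((fromRows A B).colSpan.starProjection - (fromRows C D).colSpan.starProjection) v‖ := by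
        rw [_root_.sub_apply, hv, hy]
    _ ≤ _ := ContinuousLinearMap.le_opNorm _ _

end Matrix

theorem upper_block_distance_bound_general
    (m n p : ℕ)
    (Yt Y : Matrix (Fin n) (Fin p) ℝ) (Zt Z : Matrix (Fin m) (Fin p) ℝ)
    (hYt : Yt.rank = p) (hY : Y.rank = p)
    (horth1 : (Matrix.fromRows Yt Zt)ᵀ * Matrix.fromRows Yt Zt = 1)
    (horth2 : (Matrix.fromRows Y Z)ᵀ * Matrix.fromRows Y Z = 1)
    -- the (compact) GSVD of the pair {Ỹ, Z̃}
    (W : Matrix (Fin m) (Fin p) ℝ) (G : Matrix (Fin n) (Fin p) ℝ)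
    (X : Matrix (Fin p) (Fin p) ℝ) (α β : Fin p → ℝ)
    (hW : Wᵀ * W = 1) (hG : Gᵀ * G = 1)
    (hZtdecomp : Zt = W * Matrix.diagonal α * X⁻¹)
    (hYtdecomp : Yt = G * Matrix.diagonal β * X⁻¹)
    (hα : ∀ i, 0 < α i ∧ α i < 1) (hβ : ∀ i, 0 < β i ∧ β i < 1) :
    snorm (projMat Yt - projMat Y) ≤
      Real.sqrt (1 + (⨆ i, α i / β i) ^ 2) *
        snorm (projMat (Matrix.fromRows Yt Zt) - projMat (Matrix.fromRows Y Z)) := by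
  set σ := ⨆ i, α i / β i
  have hαβ (i : Fin p) : α i ^ 2 ≤ σ ^ 2 * β i ^ 2 := by
    have hi : α i ≤ σ * β i := (div_le_iff₀ (hβ i).1).mp <|
      le_ciSup (f := fun i => α i / β i) (Set.finite_range _).bddAbove i
    rw [← mul_pow]
    exact pow_le_pow_left₀ (hα i).1.le hi 2
  have hU (x : EuclideanSpace ℝ (Fin p)) :
      ‖(fromRows Yt Zt).toEuclideanLin x‖ ≤ √(1 + σ ^ 2) * ‖Yt.toEuclideanLin x‖ := by
    have hZY := norm_sq_toEuclideanLin_mul_diagonal_mul_le hW hG hαβ X⁻¹ x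
    rw [← hZtdecomp, ← hYtdecomp] at hZY
    rw [← Real.sqrt_sq (norm_nonneg (Yt.toEuclideanLin x)), ← Real.sqrt_mul (by positivity),
      ← Real.sqrt_sq (norm_nonneg _), norm_sq_toEuclideanLin_fromRows]
    exact Real.sqrt_le_sqrt (by linarith)
  have hgram {B : Matrix (Fin n) (Fin p) ℝ} (hB : B.rank = p) : IsUnit (Bᵀ * B).det :=
    isUnit_det_transpose_mul_self_of_rank_eq (hB.trans (Fintype.card_fin p).symm)
  rw [snorm_projMat_sub_projMat (hgram hYt) (hgram hY),
    snorm_projMat_sub_projMat (by simp [horth1]) (by simp [horth2]), mul_comm]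
  refine Submodule.norm_starProjection_sub_starProjection_le_of_finrank_eq
    (by rw [finrank_colSpan, finrank_colSpan, hYt, hY]) (by positivity) ?_
  rintro _ ⟨x, rfl⟩
  refine (norm_sub_starProjection_colSpan_le Yt Zt Y Z x).trans ?_
  rw [mul_assoc]
  gcongr
  exact hU x

/-- for column orthonormal stacked matrices `[Ỹ; Z̃]` and `[Y; Z]`
with all blocks of full column rank,
`dist(span Ỹ, span Y) ≤ √(1 + σ_max²({Ỹ, Z̃})) ⬝ dist(span [Ỹ; Z̃], span [Y; Z])`,
where `σ_max({Ỹ, Z̃})` is the largest generalized singular value `α_i/β_i`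
from the GSVD `Z̃ = W C X⁻¹`, `Ỹ = G S X⁻¹` with `C² + S² = I`. The subspace
distance is the spectral norm of the difference of the orthogonal projectors. -/
theorem upper_block_distance_bound
    (m n p : ℕ) (hp : 0 < p) (hpn : p < n) (hpm : p < m)
    (Yt Y : Matrix (Fin n) (Fin p) ℝ) (Zt Z : Matrix (Fin m) (Fin p) ℝ)
    (hYt : Yt.rank = p) (hY : Y.rank = p) (hZt : Zt.rank = p) (hZ : Z.rank = p)
    (horth1 : (Matrix.fromRows Yt Zt)ᵀ * Matrix.fromRows Yt Zt = 1)
    (horth2 : (Matrix.fromRows Y Z)ᵀ * Matrix.fromRows Y Z = 1)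
    -- the (compact) GSVD of the pair {Ỹ, Z̃}
    (W : Matrix (Fin m) (Fin p) ℝ) (G : Matrix (Fin n) (Fin p) ℝ)
    (X : Matrix (Fin p) (Fin p) ℝ) (α β : Fin p → ℝ)
    (hW : Wᵀ * W = 1) (hG : Gᵀ * G = 1) (hX : IsUnit X.det)
    (hZtdecomp : Zt = W * Matrix.diagonal α * X⁻¹)
    (hYtdecomp : Yt = G * Matrix.diagonal β * X⁻¹)
    (hCS : ∀ i, α i ^ 2 + β i ^ 2 = 1)
    (hα : ∀ i, 0 < α i ∧ α i < 1) (hβ : ∀ i, 0 < β i ∧ β i < 1) :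
    snorm (projMat Yt - projMat Y) ≤
      Real.sqrt (1 + (⨆ i, α i / β i) ^ 2) *
        snorm (projMat (Matrix.fromRows Yt Zt) - projMat (Matrix.fromRows Y Z)) :=
  upper_block_distance_bound_general m n p Yt Y Zt Z hYt hY horth1 horth2 W G X α β hW hG hZtdecomp
    hYtdecomp hα hβ
end

section
/- Let u_i ∈ ℝ^m, v_i ∈ ℝ^n be unit vectors, ũ ∈ ℝ^m, ṽ ∈ ℝ^n unit vectors, and let q_i = (1/√2)[v_i; u_i] and w = (1/√2)[ṽ; ũ] be the corresponding unit vectors in ℝ^{m+n}. Then sin²∠(u_i, ũ) + sin²∠(v_i, ṽ) ≤ 2 sin²∠(q_i, w), where ∠(x, y) denotes the acute angle between the lines spanned by x and y. -/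
open Matrix

/-- for unit vectors `u_i, ũ ∈ ℝ^m`, `v_i, ṽ ∈ ℝ^n` and the
stacked unit vectors `q_i = (1/√2)[v_i; u_i]`, `w = (1/√2)[ṽ; ũ]`,
`sin²∠(u_i, ũ) + sin²∠(v_i, ṽ) ≤ 2 sin²∠(q_i, w)`, where
`sin²∠(x, y) = 1 − (xᵀy)²` for unit vectors. -/
theorem angle_splitting
    (m n : ℕ)
    (u ut : Fin m → ℝ) (v vt : Fin n → ℝ)
    (hu : u ⬝ᵥ u = 1) (hut : ut ⬝ᵥ ut = 1)
    (hv : v ⬝ᵥ v = 1) (hvt : vt ⬝ᵥ vt = 1)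
    (qi w : Fin n ⊕ Fin m → ℝ)
    (hqi : qi = (Real.sqrt 2)⁻¹ • Sum.elim v u)
    (hw : w = (Real.sqrt 2)⁻¹ • Sum.elim vt ut) :
    (1 - (u ⬝ᵥ ut) ^ 2) + (1 - (v ⬝ᵥ vt) ^ 2) ≤ 2 * (1 - (qi ⬝ᵥ w) ^ 2) := by
  have hqw : qi ⬝ᵥ w = (1/2) * (v ⬝ᵥ vt + u ⬝ᵥ ut) := by
    subst hqi hw
    have h2 : (Real.sqrt 2)⁻¹ * (Real.sqrt 2)⁻¹ = 1/2 := by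
      rw [← mul_inv]
      rw [← Real.sqrt_mul_self (by norm_num : (0:ℝ) ≤ 2)]
      norm_num
    simp only [dotProduct, Pi.smul_apply, smul_eq_mul, Fintype.sum_sum_type,
      Sum.elim_inl, Sum.elim_inr]
    have key : ∀ a b : ℝ, (Real.sqrt 2)⁻¹ * a * ((Real.sqrt 2)⁻¹ * b) = 1/2 * (a * b) := by
      intro a b; rw [← h2]; ring
    simp_rw [key, ← Finset.mul_sum, mul_add]
  rw [hqw]
  nlinarith [sq_nonneg (u ⬝ᵥ ut - v ⬝ᵥ vt)]
end

section
/- Fix 0 < η_- < a < b < η. Define ĝ(x) = arccos((2x² − η² − η_-²)/(η² − η_-²)) and g̃(x) = arccos(x/η) for x ∈ (η_-, η). Then for any σ, a ∈ (η_-, η), |ĝ(σ) − ĝ(a)| ≥ 2 |g̃(σ) − g̃(a)|. -/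
/-!
On `(η₋, η)` both maps are decreasing, with derivatives `ĝ' = -2x / (√(x² - η₋²) √(η² - x²))`
and `g̃' = -1 / √(η² - x²)`. Since `√(x² - η₋²) ≤ x`, we get `ĝ' ≤ 2 g̃' ≤ 0`, so `2 g̃` and
`ĝ - 2 g̃` are both antitone: between two points `ĝ` drops by at least as much as `2 g̃` does.
-/

open Real Set

lemma antitoneOn_of_hasDerivAt_nonpos {D : Set ℝ} (hD : Convex ℝ D) {f f' : ℝ → ℝ}
    (hf : ∀ x ∈ D, HasDerivAt f (f' x) x) (hf'₀ : ∀ x ∈ D, f' x ≤ 0) : AntitoneOn f D :=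
  antitoneOn_of_hasDerivWithinAt_nonpos hD
    (fun x hx ↦ (hf x hx).continuousAt.continuousWithinAt)
    (fun x hx ↦ (hf x (interior_subset hx)).hasDerivWithinAt)
    (fun x hx ↦ hf'₀ x (interior_subset hx))

lemma abs_sub_le_abs_sub_of_hasDerivAt_le_nonpos {D : Set ℝ} (hD : Convex ℝ D)
    {f g f' g' : ℝ → ℝ} (hf : ∀ x ∈ D, HasDerivAt f (f' x) x)
    (hg : ∀ x ∈ D, HasDerivAt g (g' x) x) (hle : ∀ x ∈ D, f' x ≤ g' x)
    (hg₀ : ∀ x ∈ D, g' x ≤ 0) {a b : ℝ} (ha : a ∈ D) (hb : b ∈ D) :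
    |g a - g b| ≤ |f a - f b| := by
  have hg_anti : AntitoneOn g D := antitoneOn_of_hasDerivAt_nonpos hD hg hg₀
  have hfg_anti : AntitoneOn (f - g) D :=
    antitoneOn_of_hasDerivAt_nonpos hD (fun x hx ↦ (hf x hx).sub (hg x hx))
      (fun x hx ↦ sub_nonpos.2 (hle x hx))
  wlog hab : a ≤ b generalizing a b
  · rw [abs_sub_comm, abs_sub_comm (f a)]
    exact this hb ha (le_of_not_ge hab)
  have hg_ab := hg_anti ha hb hab
  have hfg_ab := hfg_anti ha hb hab
  simp only [Pi.sub_apply] at hfg_ab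
  rw [abs_of_nonneg (sub_nonneg.2 hg_ab), abs_of_nonneg (by linarith)]
  linarith

lemma hasDerivAt_arccos_div {η x : ℝ} (hx : x ∈ Ioo (-η) η) :
    HasDerivAt (fun y ↦ arccos (y / η)) (-(1 / √(η ^ 2 - x ^ 2))) x := by
  obtain ⟨hx₁, hx₂⟩ := hx
  have hη : 0 < η := by linarith
  have h₁ : x / η ≠ -1 := by
    rw [ne_eq, div_eq_iff hη.ne']; linarith
  have h₂ : x / η ≠ 1 := by
    rw [ne_eq, div_eq_iff hη.ne']; linarith
  have hboundsrt : √(1 - (x / η) ^ 2) = √(η ^ 2 - x ^ 2) / η := by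
    rw [← sqrt_sq hη.le, ← sqrt_div' _ (sq_nonneg η), sqrt_sq hη.le]
    congr 1
    field_simp
  refine ((hasDerivAt_arccos h₁ h₂).comp x ((hasDerivAt_id x).div_const η)).congr_deriv ?_
  rw [hboundsrt]
  field_simp

lemma hasDerivAt_arccos_cross {ηm η x : ℝ} (h₁ : ηm ^ 2 < x ^ 2) (h₂ : x ^ 2 < η ^ 2) :
    HasDerivAt (fun y ↦ arccos ((2 * y ^ 2 - η ^ 2 - ηm ^ 2) / (η ^ 2 - ηm ^ 2)))
      (-(2 * x / (√(x ^ 2 - ηm ^ 2) * √(η ^ 2 - x ^ 2)))) x := by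
  have hc : 0 < η ^ 2 - ηm ^ 2 := by linarith
  set u := (2 * x ^ 2 - η ^ 2 - ηm ^ 2) / (η ^ 2 - ηm ^ 2) with hu
  have hu₁ : u ≠ -1 := by
    rw [ne_eq, div_eq_iff hc.ne']; linarith
  have hu₂ : u ≠ 1 := by
    rw [ne_eq, div_eq_iff hc.ne']; linarith
  have hboundsrt : √(1 - u ^ 2) = 2 * √(x ^ 2 - ηm ^ 2) * √(η ^ 2 - x ^ 2) / (η ^ 2 - ηm ^ 2) := by
    rw [← sqrt_sq (by positivity : 0 ≤ 2 * √(x ^ 2 - ηm ^ 2) * √(η ^ 2 - x ^ 2) / (η ^ 2 - ηm ^ 2))]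
    congr 1
    rw [div_pow (2 * _ * _), mul_pow, mul_pow, sq_sqrt (by linarith), sq_sqrt (by linarith), hu]
    field_simp
    ring
  have hinner : HasDerivAt (fun y ↦ (2 * y ^ 2 - η ^ 2 - ηm ^ 2) / (η ^ 2 - ηm ^ 2))
      (4 * x / (η ^ 2 - ηm ^ 2)) x := by
    refine ((((hasDerivAt_pow 2 x).const_mul 2).sub_const _).sub_const _).div_const _
      |>.congr_deriv ?_
    ring
  refine ((hasDerivAt_arccos hu₁ hu₂).comp x hinner).congr_deriv ?_
  rw [hboundsrt]
  field_simp
  ring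

lemma neg_two_mul_div_sqrt_mul_sqrt_le {ηm η x : ℝ} (hx : 0 ≤ x) (h₁ : ηm ^ 2 < x ^ 2)
    (h₂ : x ^ 2 < η ^ 2) :
    -(2 * x / (√(x ^ 2 - ηm ^ 2) * √(η ^ 2 - x ^ 2))) ≤ 2 * -(1 / √(η ^ 2 - x ^ 2)) := by
  have hq : 0 < √(x ^ 2 - ηm ^ 2) := sqrt_pos.2 (by linarith)
  have hp : 0 < √(η ^ 2 - x ^ 2) := sqrt_pos.2 (by linarith)
  have hqx : √(x ^ 2 - ηm ^ 2) ≤ x :=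
    calc √(x ^ 2 - ηm ^ 2) ≤ √(x ^ 2) := sqrt_le_sqrt (by linarith [sq_nonneg ηm])
      _ = x := sqrt_sq hx
  rw [mul_neg, neg_le_neg_iff]
  calc 2 * (1 / √(η ^ 2 - x ^ 2))
      = 2 * √(x ^ 2 - ηm ^ 2) / (√(x ^ 2 - ηm ^ 2) * √(η ^ 2 - x ^ 2)) := by field_simp
    _ ≤ 2 * x / (√(x ^ 2 - ηm ^ 2) * √(η ^ 2 - x ^ 2)) := by gcongr

theorem arccos_mapping_comparison_general
    (ηm η : ℝ) (h0 : 0 < ηm)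
    (σ a : ℝ) (hσ : σ ∈ Set.Ioo ηm η) (ha : a ∈ Set.Ioo ηm η) :
    2 * |Real.arccos (a / η) - Real.arccos (σ / η)| ≤
      |Real.arccos ((2 * a ^ 2 - η ^ 2 - ηm ^ 2) / (η ^ 2 - ηm ^ 2)) -
        Real.arccos ((2 * σ ^ 2 - η ^ 2 - ηm ^ 2) / (η ^ 2 - ηm ^ 2))| := by
  have hbounds : ∀ x ∈ Ioo ηm η, 0 < x ∧ ηm ^ 2 < x ^ 2 ∧ x ^ 2 < η ^ 2 := fun x ⟨hx₁, hx₂⟩ ↦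
    ⟨h0.trans hx₁, pow_lt_pow_left₀ hx₁ h0.le two_ne_zero,
      pow_lt_pow_left₀ hx₂ (h0.trans hx₁).le two_ne_zero⟩
  have key := abs_sub_le_abs_sub_of_hasDerivAt_le_nonpos (convex_Ioo ηm η)
    (fun x hx ↦ hasDerivAt_arccos_cross (hbounds x hx).2.1 (hbounds x hx).2.2)
    (fun x hx ↦ (hasDerivAt_arccos_div ⟨by linarith [(hbounds x hx).1, hx.2], hx.2⟩).const_mul 2)
    (fun x hx ↦ neg_two_mul_div_sqrt_mul_sqrt_le (hbounds x hx).1.le (hbounds x hx).2.1 (hbounds x hx).2.2)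
    (fun x _ ↦ mul_nonpos_of_nonneg_of_nonpos zero_le_two (neg_nonpos.2 (by positivity)))
    ha hσ
  rwa [← mul_sub, abs_mul, abs_two] at key

/-- with `0 < η₋ < η`, `ĝ(x) = arccos((2x² − η² − η₋²)/(η² − η₋²))`
and `g̃(x) = arccos(x/η)`, for any `σ, a ∈ (η₋, η)` one has
`|ĝ(σ) − ĝ(a)| ≥ 2 |g̃(σ) − g̃(a)|`. -/
theorem arccos_mapping_comparison
    (ηm η : ℝ) (h0 : 0 < ηm) (hη : ηm < η)
    (σ a : ℝ) (hσ : σ ∈ Set.Ioo ηm η) (ha : a ∈ Set.Ioo ηm η) :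
    2 * |Real.arccos (a / η) - Real.arccos (σ / η)| ≤
      |Real.arccos ((2 * a ^ 2 - η ^ 2 - ηm ^ 2) / (η ^ 2 - ηm ^ 2)) -
        Real.arccos ((2 * σ ^ 2 - η ^ 2 - ηm ^ 2) / (η ^ 2 - ηm ^ 2))| :=
  arccos_mapping_comparison_general ηm η h0 σ a hσ ha
end
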